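/- arXiv:math/0108209 — 3 statements merged into one kernel-verified Lean document; each statement's English description precedes it below -/
import Mathlib

section
/- If α and β are finite open covers of X and α refines β, then for every x and every monotone unbounded f, K^f(x,T,β) ≤ K^f(x,T,α), where K^f(x,T,γ) = limsup_n min_{ω ∈ φ_γ(x)} AIC_U(ω^n)/f(n). -/
open Filter Set ENNReal

/-- Kolmogorov complexity of a natural number (code of a string over a finite alphabet)
w.r.t. a machine `U`. -/
noncomputable def kol (U : List Bool →. ℕ) (x : ℕ) : ℕ∞ :=
  sInf {n : ℕ∞ | ∃ p : List Bool, (p.length : ℕ∞) = n ∧ x ∈ U p}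

/-- The set `φ_β(x)` of symbolic orbits of `x` w.r.t. the open cover `β`. -/
def phi {X : Type*} (T : X → X) {N : ℕ} (β : Fin N → Set X) (x : X) : Set (ℕ → Fin N) :=
  {ω | ∀ n : ℕ, T^[n] x ∈ β (ω n)}

/-- `min_{ω ∈ φ_β(x)} AIC_U(ω^n)`. -/
noncomputable def minAIC (U : List Bool →. ℕ) {X : Type*} (T : X → X) {N : ℕ}
    (β : Fin N → Set X) (x : X) (n : ℕ) : ℕ∞ :=
  ⨅ (ω : ℕ → Fin N) (_ : ω ∈ phi T β x),
    kol U (Encodable.encode (List.ofFn fun i : Fin n => ω i))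

/-- `K^f(x,T,β) = limsup_n min_{ω ∈ φ_β(x)} AIC_U(ω^n)/f(n)`. -/
noncomputable def KfCov (U : List Bool →. ℕ) {X : Type*} (T : X → X) (f : ℕ → ℝ) {N : ℕ}
    (β : Fin N → Set X) (x : X) : ℝ≥0∞ :=
  limsup (fun n : ℕ => (minAIC U T β x n : ℝ≥0∞) / ENNReal.ofReal (f n)) atTop

/-! Choose for each element of `α` an element of `β` containing it, `r : Fin N → Fin M`. Then
`r ∘ ω` is a `β`-orbit of `x` for every `α`-orbit `ω`, and relabelling words by `r` is computable,
so by optimality of `U` its complexity grows by at most a constant `c`. Hence the two minimal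
complexities differ by at most `c`, which vanishes after division by `f n → ∞`. -/

open Topology

def IsAdditivelyOptimal (U : List Bool →. ℕ) : Prop :=
  ∀ C : List Bool →. ℕ, Partrec C → ∃ c : ℕ, ∀ x : ℕ, kol U x ≤ kol C x + (c : ℕ∞)

theorem kol_map_le (U : List Bool →. ℕ) (g : ℕ → ℕ) (m : ℕ) :
    kol (fun p => (U p).map g) (g m) ≤ kol U m :=
  sInf_le_sInf fun _ ⟨p, hp, hm⟩ => ⟨p, hp, Part.mem_map g hm⟩

theorem IsAdditivelyOptimal.exists_kol_comp_le {U : List Bool →. ℕ}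
    (hopt : IsAdditivelyOptimal U) (hU : Partrec U) {g : ℕ → ℕ} (hg : Computable g) :
    ∃ c : ℕ, ∀ m, kol U (g m) ≤ kol U m + (c : ℕ∞) := by
  obtain ⟨c, hc⟩ := hopt _ (hU.map (hg.comp Computable.snd).to₂)
  exact ⟨c, fun m => (hc (g m)).trans (add_le_add_left (kol_map_le U g m) _)⟩

def mapCode {α β : Type*} [Encodable α] [Encodable β] (r : α → β) (m : ℕ) : ℕ :=
  Encodable.encode (((Encodable.decode m : Option (List α)).getD []).map r)

@[simp]
theorem mapCode_encode {α β : Type*} [Encodable α] [Encodable β] (r : α → β) (l : List α) :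
    mapCode r (Encodable.encode l) = Encodable.encode (l.map r) := by
  simp [mapCode]

theorem Primrec.mapCode {α β : Type*} [Primcodable α] [Primcodable β] {r : α → β}
    (hr : Primrec r) : Primrec (mapCode r) :=
  Primrec.encode.comp <| Primrec.list_map
    (Primrec.option_getD.comp Primrec.decode (Primrec.const [])) (hr.comp Primrec.snd)

theorem comp_mem_phi {X : Type*} {T : X → X} {N M : ℕ} {α : Fin N → Set X}
    {β : Fin M → Set X} {r : Fin N → Fin M} (hr : ∀ i, α i ⊆ β (r i)) {x : X} {ω : ℕ → Fin N}
    (hω : ω ∈ phi T α x) : r ∘ ω ∈ phi T β x :=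
  fun n => hr _ (hω n)

theorem minAIC_le_add_of_refines {U : List Bool →. ℕ} {X : Type*} {T : X → X} {N M : ℕ}
    {α : Fin N → Set X} {β : Fin M → Set X} {r : Fin N → Fin M} (hr : ∀ i, α i ⊆ β (r i))
    {c : ℕ∞} (hc : ∀ m, kol U (mapCode r m) ≤ kol U m + c) (x : X) (n : ℕ) :
    minAIC U T β x n ≤ minAIC U T α x n + c := by
  simp only [minAIC, ENat.iInf_add]
  refine le_iInf₂ fun ω hω => iInf₂_le_of_le (r ∘ ω) (comp_mem_phi hr hω) ?_
  simpa [List.map_ofFn, Function.comp_def] using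
    hc (Encodable.encode (List.ofFn fun i : Fin n => ω i))

theorem limsup_div_le_of_le_add {ι : Type*} {l : Filter ι} {u v F : ι → ℝ≥0∞} {c : ℝ≥0∞}
    (hF : Tendsto F l (𝓝 ∞)) (hc : c ≠ ∞) (h : ∀ i, v i ≤ u i + c) :
    limsup (fun i => v i / F i) l ≤ limsup (fun i => u i / F i) l := by
  have hcF : Tendsto (fun i => c / F i) l (𝓝 0) := by
    simpa [div_eq_mul_inv] using
      ENNReal.Tendsto.const_mul (tendsto_inv_iff.2 hF) (Or.inr hc)
  calc limsup (fun i => v i / F i) l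
      ≤ limsup ((fun i => u i / F i) + fun i => c / F i) l :=
        limsup_le_limsup (.of_forall fun i => by
          rw [Pi.add_apply, ← ENNReal.add_div]
          exact ENNReal.div_le_div_right (h i) (F i))
    _ = limsup (fun i => u i / F i) l := limsup_add_of_right_tendsto_zero hcF _

theorem stmt14_general {X : Type*} (T : X → X)
    (U : List Bool →. ℕ) (hU : Partrec U)
    (huniv : ∀ C : List Bool →. ℕ, Partrec C →
      ∃ c : ℕ, ∀ x : ℕ, kol U x ≤ kol C x + (c : ℕ∞))
    (f : ℕ → ℝ) (hf' : Tendsto f atTop atTop)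
    {N M : ℕ} (α : Fin N → Set X) (β : Fin M → Set X)
    (href : ∀ i : Fin N, ∃ j : Fin M, α i ⊆ β j) (x : X) :
    KfCov U T f β x ≤ KfCov U T f α x := by
  choose r hr using href
  obtain ⟨c, hc⟩ := IsAdditivelyOptimal.exists_kol_comp_le huniv hU
    (Primrec.mapCode (Primrec.dom_finite r)).to_comp
  refine limsup_div_le_of_le_add (c := c) (ENNReal.tendsto_ofReal_atTop.comp hf') (by simp)
    fun n => ?_
  exact_mod_cast minAIC_le_add_of_refines hr hc x n

/-- If `α` refines `β` then `K^f(x,T,β) ≤ K^f(x,T,α)`. -/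
theorem stmt14 {X : Type*} [MetricSpace X] (T : X → X) (hT : Continuous T)
    (U : List Bool →. ℕ) (hU : Partrec U)
    (huniv : ∀ C : List Bool →. ℕ, Partrec C →
      ∃ c : ℕ, ∀ x : ℕ, kol U x ≤ kol C x + (c : ℕ∞))
    (f : ℕ → ℝ) (hf : Monotone f) (hf' : Tendsto f atTop atTop)
    {N M : ℕ} (α : Fin N → Set X) (β : Fin M → Set X)
    (hαopen : ∀ i, IsOpen (α i)) (hβopen : ∀ j, IsOpen (β j))
    (hαcov : ∀ x : X, ∃ i, x ∈ α i) (hβcov : ∀ x : X, ∃ j, x ∈ β j)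
    (href : ∀ i : Fin N, ∃ j : Fin M, α i ⊆ β j) (x : X) :
    KfCov U T f β x ≤ KfCov U T f α x :=
  stmt14_general T U hU huniv f hf' α β href x
end

section
/- Generalized orbit complexity is a topological conjugacy invariant: if π: X → Y is a homeomorphism conjugating (X,T) and (Y,S) (π∘T = S∘π) and y = π(x), then K^f(x,T) = K^f(y,S), where K^f(x,T) = sup over finite open covers β of limsup_n min_{ω∈φ_β(x)} AIC_U(ω^n)/f(n). -/
open Filter Set ENNReal

/-- `K^f(x,T)`: the sup over all finite open covers. -/
noncomputable def Kf (U : List Bool →. ℕ) {X : Type*} [TopologicalSpace X] (T : X → X)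
    (f : ℕ → ℝ) (x : X) : ℝ≥0∞ :=
  ⨆ (N : ℕ) (β : Fin N → Set X) (_ : ∀ i, IsOpen (β i)) (_ : ∀ y : X, ∃ i, y ∈ β i),
    KfCov U T f β x

lemma iterate_conj {X Y : Type*} [TopologicalSpace X] [TopologicalSpace Y] (T : X → X) (S : Y → Y) (π : X ≃ₜ Y)
    (hconj : ∀ x : X, S (π x) = π (T x)) (x : X) (n : ℕ) :
    S^[n] (π x) = π (T^[n] x) := by
  induction n with
  | zero => simp
  | succ n ih => rw [Function.iterate_succ_apply', ih, hconj, Function.iterate_succ_apply']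

lemma Kf_le_conj {X Y : Type*} [TopologicalSpace X] [TopologicalSpace Y]
    (T : X → X) (S : Y → Y) (π : X ≃ₜ Y)
    (hconj : ∀ x : X, S (π x) = π (T x))
    (U : List Bool →. ℕ) (f : ℕ → ℝ) (x : X) :
    Kf U T f x ≤ Kf U S f (π x) := by
  apply iSup_le; intro N
  apply iSup_le; intro β
  apply iSup_le; intro hopen
  apply iSup_le; intro hcov
  have key : ∀ i, IsOpen (π.symm ⁻¹' (β i)) := fun i =>
    (hopen i).preimage π.symm.continuous
  have hcov' : ∀ z : Y, ∃ i, z ∈ π.symm ⁻¹' (β i) := fun z => hcov (π.symm z)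
  have hphi : phi S (fun i => π.symm ⁻¹' (β i)) (π x) = phi T β x := by
    ext ω
    simp only [phi, Set.mem_setOf_eq, Set.mem_preimage]
    refine forall_congr' fun n => ?_
    rw [iterate_conj T S π hconj, Homeomorph.symm_apply_apply]
  have hKf : KfCov U S f (fun i => π.symm ⁻¹' (β i)) (π x) = KfCov U T f β x := by
    unfold KfCov minAIC
    rw [hphi]
  calc KfCov U T f β x = KfCov U S f (fun i => π.symm ⁻¹' (β i)) (π x) := hKf.symm
    _ ≤ Kf U S f (π x) := by
        refine le_iSup_of_le N ?_
        refine le_iSup_of_le (fun i => π.symm ⁻¹' (β i)) ?_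
        exact le_iSup_of_le key (le_iSup_of_le hcov' le_rfl)

/-- Generalized orbit complexity is invariant under topological conjugacy. -/
theorem stmt15 {X Y : Type*} [MetricSpace X] [MetricSpace Y]
    (T : X → X) (S : Y → Y) (hT : Continuous T) (hS : Continuous S)
    (π : X ≃ₜ Y) (hconj : ∀ x : X, S (π x) = π (T x))
    (U : List Bool →. ℕ) (hU : Partrec U)
    (huniv : ∀ C : List Bool →. ℕ, Partrec C →
      ∃ c : ℕ, ∀ x : ℕ, kol U x ≤ kol C x + (c : ℕ∞))
    (f : ℕ → ℝ) (hf : Monotone f) (hf' : Tendsto f atTop atTop)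
    (x : X) (y : Y) (hxy : y = π x) :
    Kf U T f x = Kf U S f y := by
  subst hxy
  refine le_antisymm (Kf_le_conj T S π hconj U f x) ?_
  have hconj' : ∀ z : Y, T (π.symm z) = π.symm (S z) := by
    intro z
    have := hconj (π.symm z)
    rw [π.apply_symm_apply] at this
    exact π.injective (by rw [π.apply_symm_apply, this])
  have := Kf_le_conj S T π.symm hconj' U f (π x)
  rwa [π.symm_apply_apply] at this
end

section
/- The set of points of low point-complexity has small dimension: for a metric space X with computable interpretation I, the set W^d = {x ∈ X : liminf_{i→∞} S^I(x, 2^{-i})/i ≤ d} has Hausdorff dimension ≤ d. Consequently, for every d, for all x outside a set F of d-dimensional Hausdorff measure zero, for every δ > 0 and all sufficiently small ε: S^I(x,ε) ≥ −(d − δ) log₂ ε. -/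
/-!
A point of `W^d` lies, for infinitely many `i`, within `2⁻¹ ^ i` of the output of a program of
length at most `a * i`, for any `a > d`. Covering by these balls at all scales `i ≥ k` uses at
most `2 ^ (a * i + 1)` balls of diameter `2 * 2⁻¹ ^ i` at scale `i`, so the `e`-dimensional mass
of the cover is the tail of the geometric series `∑ 2 ^ ((a - e) * i)` and tends to `0` when
`a < e`. Hence `μH[e] (W^d) = 0` for all `e > d`. Outside the null set `⋃_{q < d} W^q`
(`q` rational) one has `S^I(x, 2⁻¹ ^ i) > q * i` for all large `i`, and monotonicity of `S^I` in
`ε` transfers this to every small `ε`.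
-/

open Metric Set Filter ENNReal MeasureTheory

/-- `I : Σ → X` is a computable interpretation. -/
def IsCompInterp {X : Type*} [MetricSpace X] (I : List Bool → X) : Prop :=
  DenseRange I ∧
    ∃ D : List Bool → List Bool → ℕ → ℚ,
      Computable (fun q : (List Bool × List Bool) × ℕ => D q.1.1 q.1.2 q.2) ∧
      ∀ (s₁ s₂ : List Bool) (n : ℕ),
        |dist (I s₁) (I s₂) - (D s₁ s₂ n : ℝ)| ≤ (2 : ℝ)⁻¹ ^ n

/-- `S^I(x,ε) = min{|p| : d(I(U(p)), x) < ε}`. -/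
noncomputable def Sinfo (U : List Bool →. List Bool) {Y : Type*} [MetricSpace Y]
    (I : List Bool → Y) (x : Y) (ε : ℝ) : ℕ∞ :=
  sInf {n : ℕ∞ | ∃ p : List Bool, (p.length : ℕ∞) = n ∧ ∃ s ∈ U p, dist (I s) x < ε}

/-- The set of points of complexity exponent at most `d`:
`W^d = {x : liminf_i S^I(x, 2^{-i})/i ≤ d}`. -/
noncomputable def Wset (U : List Bool →. List Bool) {Y : Type*} [MetricSpace Y]
    (I : List Bool → Y) (d : ℝ) : Set Y :=
  {x | liminf (fun i : ℕ => (Sinfo U I x ((2 : ℝ)⁻¹ ^ i) : ℝ≥0∞) / (i : ℝ≥0∞)) atTop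
    ≤ ENNReal.ofReal d}

open scoped Topology

theorem tsum_list_comp_length {α : Type*} [Fintype α] (f : ℕ → ℝ≥0∞) :
    ∑' p : List α, f p.length = ∑' n, (Fintype.card α : ℝ≥0∞) ^ n * f n := by
  rw [← (Equiv.sigmaFiberEquiv List.length).tsum_eq, ENNReal.tsum_sigma']
  congr 1 with n
  change ∑' v : List.Vector α n, f v.1.length = _
  simp [List.Vector.length_val, tsum_fintype, card_vector]

theorem tsum_ite_length_le (x : ℝ) (hx : 0 ≤ x) (b : ℝ≥0∞) :
    ∑' p : List Bool, (if (p.length : ℝ) ≤ x then b else 0) ≤ 2 ^ (x + 1) * b := by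
  have hfloor (n : ℕ) : (n : ℝ) ≤ x ↔ n ∈ Finset.range (⌊x⌋₊ + 1) := by
    simp [Nat.le_floor_iff hx]
  calc ∑' p : List Bool, (if (p.length : ℝ) ≤ x then b else 0)
      = ∑ n ∈ Finset.range (⌊x⌋₊ + 1), 2 ^ n * b := by
        rw [tsum_list_comp_length (fun n => if (n : ℝ) ≤ x then b else 0),
          tsum_eq_sum (s := Finset.range (⌊x⌋₊ + 1))]
        · refine Finset.sum_congr rfl fun n hn => ?_
          simp [(hfloor n).2 hn]
        · intro n hn
          simp [mt (hfloor n).1 hn]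
    _ = ((∑ n ∈ Finset.range (⌊x⌋₊ + 1), 2 ^ n : ℕ) : ℝ≥0∞) * b := by
        rw [← Finset.sum_mul]; push_cast; rfl
    _ ≤ ((2 ^ (⌊x⌋₊ + 1) : ℕ) : ℝ≥0∞) * b := by
        gcongr
        exact (Nat.geomSum_lt le_rfl fun n hn => Finset.mem_range.1 hn).le
    _ ≤ 2 ^ (x + 1) * b := by
        gcongr
        rw [Nat.cast_pow, ← ENNReal.rpow_natCast]
        push_cast
        exact ENNReal.rpow_le_rpow_of_exponent_le one_le_two (by gcongr; exact Nat.floor_le hx)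

theorem two_rpow_mul_two_mul_inv_pow_rpow (a e : ℝ) (i : ℕ) :
    (2 : ℝ≥0∞) ^ (a * i + 1) * (2 * 2⁻¹ ^ i) ^ e = 2 ^ (1 + e) * (2 ^ (a - e)) ^ i := by
  have h2 : (2 : ℝ≥0∞) ≠ 0 := two_ne_zero
  have h2' : (2 : ℝ≥0∞) ≠ ⊤ := ENNReal.ofNat_ne_top
  have hscale : (2 : ℝ≥0∞) * 2⁻¹ ^ i = 2 ^ (1 - (i : ℝ)) := by
    rw [sub_eq_add_neg, ENNReal.rpow_add _ _ h2 h2', ENNReal.rpow_one, ENNReal.rpow_neg,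
      ENNReal.rpow_natCast, ENNReal.inv_pow]
  rw [hscale, ← ENNReal.rpow_mul, ← ENNReal.rpow_natCast, ← ENNReal.rpow_mul,
    ← ENNReal.rpow_add _ _ h2 h2', ← ENNReal.rpow_add _ _ h2 h2']
  ring_nf

theorem tsum_two_rpow_mul_two_mul_inv_pow_rpow_ne_top {a e : ℝ} (hae : a < e) :
    ∑' i : ℕ, (2 : ℝ≥0∞) ^ (a * i + 1) * (2 * 2⁻¹ ^ i) ^ e ≠ ∞ := by
  have hρ : (2 : ℝ≥0∞) ^ (a - e) < 1 :=
    ENNReal.rpow_lt_one_of_one_lt_of_neg one_lt_two (sub_neg.2 hae)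
  simp_rw [two_rpow_mul_two_mul_inv_pow_rpow, ENNReal.tsum_mul_left, ENNReal.tsum_geometric]
  exact ENNReal.mul_ne_top (by simp) (ENNReal.inv_ne_top.2 (tsub_pos_of_lt hρ).ne')

theorem tsum_ediam_rpow_ite_eball_le {X : Type*} [MetricSpace X] (c : List Bool → X) {a e : ℝ}
    (ha : 0 ≤ a) (he : 0 < e) (i : ℕ) :
    ∑' p : List Bool, ediam (if (p.length : ℝ) ≤ a * i then eball (c p) (2⁻¹ ^ i) else ∅) ^ e
      ≤ 2 ^ (a * i + 1) * (2 * 2⁻¹ ^ i) ^ e :=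
  calc _ ≤ ∑' p : List Bool, if (p.length : ℝ) ≤ a * i then (2 * 2⁻¹ ^ i) ^ e else 0 :=
        ENNReal.tsum_le_tsum fun p => by
          split_ifs
          · exact ENNReal.rpow_le_rpow ediam_eball_le he.le
          · simp [ENNReal.zero_rpow_of_pos he]
    _ ≤ _ := tsum_ite_length_le _ (by positivity) _

theorem hausdorffMeasure_frequently_mem_eball_eq_zero {X : Type*} [MetricSpace X]
    [MeasurableSpace X] [BorelSpace X] (c : List Bool → X) {a e : ℝ} (ha : 0 ≤ a)
    (hae : a < e) :
    μH[e] {x | ∃ᶠ i : ℕ in atTop, ∃ p : List Bool,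
      (p.length : ℝ) ≤ a * i ∧ x ∈ eball (c p) (2⁻¹ ^ i)} = 0 := by
  set A := {x | ∃ᶠ i : ℕ in atTop, ∃ p : List Bool,
      (p.length : ℝ) ≤ a * i ∧ x ∈ eball (c p) (2⁻¹ ^ i)}
  set g : ℕ → ℝ≥0∞ := fun i => 2 ^ (a * i + 1) * (2 * 2⁻¹ ^ i) ^ e
  -- the `k`-th cover uses the scales `i = j + k ≥ k`
  set t : ℕ → ℕ × List Bool → Set X := fun k jp =>
    if (jp.2.length : ℝ) ≤ a * ↑(jp.1 + k) then eball (c jp.2) (2⁻¹ ^ (jp.1 + k)) else ∅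
  have hradius : Tendsto (fun k : ℕ => 2 * (2⁻¹ : ℝ≥0∞) ^ k) atTop (𝓝 0) := by
    simpa using ENNReal.Tendsto.const_mul
      (ENNReal.tendsto_pow_atTop_nhds_zero_of_lt_one (by norm_num : (2 : ℝ≥0∞)⁻¹ < 1))
      (Or.inr ENNReal.ofNat_ne_top)
  have hdiam (k : ℕ) (jp : ℕ × List Bool) : ediam (t k jp) ≤ 2 * 2⁻¹ ^ k := by
    simp only [t]
    split_ifs
    · refine ediam_eball_le.trans ?_
      gcongr 2 * ?_
      exact pow_le_pow_of_le_one zero_le (by norm_num) (Nat.le_add_left _ _)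
    · simp
  have hcover (k : ℕ) : A ⊆ ⋃ jp, t k jp := fun x hx => by
    obtain ⟨i, hki, p, hp, hx⟩ := (frequently_atTop.1 hx) k
    refine mem_iUnion.2 ⟨(i - k, p), ?_⟩
    simp only [t, Nat.sub_add_cancel hki, if_pos hp]
    exact hx
  have hsum (k : ℕ) : ∑' jp, ediam (t k jp) ^ e ≤ ∑' j, g (j + k) := by
    rw [ENNReal.tsum_prod']
    exact ENNReal.tsum_le_tsum fun j =>
      tsum_ediam_rpow_ite_eball_le c ha (ha.trans_lt hae) (j + k)
  refine le_antisymm ?_ zero_le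
  calc μH[e] A ≤ liminf (fun k => ∑' jp, ediam (t k jp) ^ e) atTop :=
        Measure.hausdorffMeasure_le_liminf_tsum e A _ hradius t (Eventually.of_forall hdiam)
          (Eventually.of_forall hcover)
    _ ≤ liminf (fun k => ∑' j, g (j + k)) atTop := liminf_le_liminf (Eventually.of_forall hsum)
    _ = 0 := (ENNReal.tendsto_sum_nat_add g
        (tsum_two_rpow_mul_two_mul_inv_pow_rpow_ne_top hae)).liminf_eq

theorem exists_dyadic_scale {ε : ℝ} (hε : 0 < ε) {N : ℕ} (hεN : ε < (2 : ℝ)⁻¹ ^ N) :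
    ∃ i ≥ N, ε ≤ (2 : ℝ)⁻¹ ^ i ∧ -Real.logb 2 ε < i + 1 := by
  have hpow (n : ℕ) : (2 : ℝ)⁻¹ ^ n = 2 ^ (-(n : ℝ)) := by
    rw [Real.rpow_neg zero_le_two, Real.rpow_natCast, inv_pow]
  have hN : (N : ℝ) ≤ -Real.logb 2 ε := by
    have := Real.logb_lt_logb one_lt_two hε hεN
    rw [hpow, Real.logb_rpow two_pos one_lt_two.ne'] at this
    linarith
  refine ⟨⌊-Real.logb 2 ε⌋₊, Nat.le_floor hN, ?_, Nat.lt_floor_add_one _⟩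
  rw [hpow, ← Real.logb_le_iff_le_rpow one_lt_two hε]
  linarith [Nat.floor_le ((Nat.cast_nonneg N).trans hN)]

section Sinfo

variable {X : Type*} [MetricSpace X] (U : List Bool →. List Bool) (I : List Bool → X)

theorem Sinfo_antitone (x : X) : Antitone (Sinfo U I x) := fun _ _ hε =>
  sInf_le_sInf fun _ ⟨p, hp, s, hs, hsx⟩ => ⟨p, hp, s, hs, hsx.trans_le hε⟩

variable {U I}

theorem exists_program_of_Sinfo_ne_top {x : X} {ε : ℝ} (h : Sinfo U I x ε ≠ ⊤) :
    ∃ p : List Bool, (p.length : ℕ∞) = Sinfo U I x ε ∧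
      ∃ s ∈ U p, dist (I s) x < ε := by
  have hne : {n : ℕ∞ | ∃ p : List Bool, (p.length : ℕ∞) = n ∧
      ∃ s ∈ U p, dist (I s) x < ε}.Nonempty :=
    Set.nonempty_iff_ne_empty.2 fun hempty => h (by rw [Sinfo, hempty, sInf_empty])
  exact csInf_mem hne

theorem Wset_subset_frequently_mem_eball {d a : ℝ} (hda : d < a) (ha : 0 < a) :
    ∃ c : List Bool → X, Wset U I d ⊆
      {x | ∃ᶠ i : ℕ in atTop, ∃ p : List Bool,
        (p.length : ℝ) ≤ a * i ∧ x ∈ eball (c p) (2⁻¹ ^ i)} := by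
  classical
  refine ⟨fun p => I ((U p).getOrElse []), fun x hx => ?_⟩
  have hlt : liminf (fun i : ℕ => (Sinfo U I x ((2 : ℝ)⁻¹ ^ i) : ℝ≥0∞) / i) atTop
      < ENNReal.ofReal a := hx.trans_lt ((ENNReal.ofReal_lt_ofReal_iff ha).2 hda)
  refine ((frequently_lt_of_liminf_lt (h := hlt)).and_eventually
    (eventually_ne_atTop 0)).mono fun i ⟨hi, hi0⟩ => ?_
  rw [ENNReal.div_lt_iff (Or.inl (Nat.cast_ne_zero.2 hi0)) (Or.inl (ENNReal.natCast_ne_top i)),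
    ← ENNReal.ofReal_natCast, ← ENNReal.ofReal_mul ha.le] at hi
  obtain ⟨p, hp, s, hs, hsx⟩ := exists_program_of_Sinfo_ne_top
    (ENat.toENNReal_lt_top.1 (hi.trans ENNReal.ofReal_lt_top)).ne
  refine ⟨p, ?_, ?_⟩
  · have hlen : ENNReal.ofReal p.length < ENNReal.ofReal (a * i) := by
      rwa [ENNReal.ofReal_natCast, ← ENat.toENNReal_coe, hp]
    exact ((ENNReal.ofReal_lt_ofReal_iff_of_nonneg (Nat.cast_nonneg _)).1 hlen).le
  · have hr : (2⁻¹ : ℝ≥0∞) ^ i = ENNReal.ofReal ((2 : ℝ)⁻¹ ^ i) := by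
      rw [ENNReal.ofReal_pow (by norm_num), ENNReal.ofReal_inv_of_pos two_pos,
        ENNReal.ofReal_ofNat]
    rw [mem_eball]
    beta_reduce
    rw [Part.getOrElse_of_dom _ (Part.dom_iff_mem.2 ⟨s, hs⟩), Part.get_eq_of_mem hs, hr,
      edist_lt_ofReal, dist_comm]
    exact hsx

theorem eventually_ofReal_mul_lt_Sinfo_of_notMem_Wset {x : X} {q : ℝ} (hx : x ∉ Wset U I q) :
    ∀ᶠ i : ℕ in atTop, ENNReal.ofReal q * i < Sinfo U I x ((2 : ℝ)⁻¹ ^ i) := by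
  have hlt : ENNReal.ofReal q <
      liminf (fun i : ℕ => (Sinfo U I x ((2 : ℝ)⁻¹ ^ i) : ℝ≥0∞) / i) atTop :=
    not_le.1 hx
  filter_upwards [eventually_lt_of_lt_liminf hlt, eventually_ne_atTop 0] with i hi hi0
  rwa [ENNReal.lt_div_iff_mul_lt (Or.inl (Nat.cast_ne_zero.2 hi0))
    (Or.inl (ENNReal.natCast_ne_top i))] at hi

theorem exists_ofReal_neg_mul_logb_le_Sinfo_of_notMem_Wset {x : X} {c q : ℝ} (hc : 0 ≤ c)
    (hcq : c < q) (hx : x ∉ Wset U I q) :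
    ∃ εbar > (0 : ℝ), ∀ ε : ℝ, 0 < ε → ε < εbar →
      ENNReal.ofReal (-c * Real.logb 2 ε) ≤ (Sinfo U I x ε : ℝ≥0∞) := by
  have hq : 0 < q := hc.trans_lt hcq
  -- the margin `q - c` absorbs rounding `-logb 2 ε` down to the dyadic scale `i`
  have hmargin : ∀ᶠ i : ℕ in atTop, c ≤ (q - c) * i :=
    (tendsto_natCast_atTop_atTop.const_mul_atTop (sub_pos.2 hcq)).eventually_ge_atTop c
  obtain ⟨N, hN⟩ := eventually_atTop.1
    ((eventually_ofReal_mul_lt_Sinfo_of_notMem_Wset hx).and hmargin)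
  refine ⟨(2 : ℝ)⁻¹ ^ N, by positivity, fun ε hε hεN => ?_⟩
  obtain ⟨i, hNi, hεi, hlog⟩ := exists_dyadic_scale hε hεN
  obtain ⟨hSi, hci⟩ := hN i hNi
  calc ENNReal.ofReal (-c * Real.logb 2 ε) ≤ ENNReal.ofReal (q * i) :=
        ENNReal.ofReal_le_ofReal (by nlinarith)
    _ = ENNReal.ofReal q * i := by rw [ENNReal.ofReal_mul hq.le, ENNReal.ofReal_natCast]
    _ ≤ Sinfo U I x ((2 : ℝ)⁻¹ ^ i) := hSi.le
    _ ≤ Sinfo U I x ε := ENat.toENNReal_le.2 (Sinfo_antitone U I x hεi)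

variable (U I) [MeasurableSpace X] [BorelSpace X]

theorem hausdorffMeasure_Wset_eq_zero {d e : ℝ} (hde : d < e) (he : 0 < e) :
    μH[e] (Wset U I d) = 0 := by
  obtain ⟨a, hda, hae⟩ := exists_between (max_lt hde he)
  obtain ⟨c, hc⟩ := Wset_subset_frequently_mem_eball (U := U) (I := I)
    ((le_max_left d 0).trans_lt hda) ((le_max_right d 0).trans_lt hda)
  exact measure_mono_null hc
    (hausdorffMeasure_frequently_mem_eball_eq_zero c ((le_max_right d 0).trans hda.le) hae)

end Sinfo

theorem stmt18_general {X : Type*} [MetricSpace X] [MeasurableSpace X] [BorelSpace X]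
    (I : List Bool → X)
    (U : List Bool →. List Bool)
    (d : ℝ) :
    dimH (Wset U I d) ≤ ENNReal.ofReal d ∧
      ∃ F : Set X, μH[d] F = 0 ∧
        ∀ x ∉ F, ∀ δ > (0 : ℝ), ∃ εbar > (0 : ℝ), ∀ ε : ℝ, 0 < ε → ε < εbar →
          ENNReal.ofReal (-(d - δ) * Real.logb 2 ε) ≤ (Sinfo U I x ε : ℝ≥0∞) := by
  refine ⟨dimH_le fun e he => le_of_not_gt fun hde => ?_,
    ⋃ (q : ℚ) (_ : 0 < (q : ℝ) ∧ (q : ℝ) < d), Wset U I q, ?_, ?_⟩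
  · rw [← ENNReal.ofReal_coe_nnreal, ENNReal.ofReal_lt_ofReal_iff'] at hde
    simp [hausdorffMeasure_Wset_eq_zero U I hde.1 hde.2] at he
  · exact measure_iUnion_null fun q => measure_iUnion_null fun hq =>
      hausdorffMeasure_Wset_eq_zero U I hq.2 (hq.1.trans hq.2)
  · intro x hx δ hδ
    rcases le_or_gt d δ with hdδ | hδd
    · refine ⟨1, one_pos, fun ε hε hε1 => ?_⟩
      rw [ENNReal.ofReal_of_nonpos
        (mul_nonpos_of_nonneg_of_nonpos (by linarith) (Real.logb_nonpos one_lt_two hε.le hε1.le))]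
      exact zero_le
    · obtain ⟨q, hq, hqd⟩ := exists_rat_btwn (max_lt (hδ.trans hδd) (sub_lt_self d hδ))
      refine exists_ofReal_neg_mul_logb_le_Sinfo_of_notMem_Wset (sub_nonneg.2 hδd.le)
        ((le_max_right _ _).trans_lt hq) fun hxq => hx ?_
      exact mem_iUnion₂.2 ⟨q, ⟨(le_max_left _ _).trans_lt hq, hqd⟩, hxq⟩

/-- The set of points of low point-complexity has Hausdorff dimension `≤ d`, and
consequently outside a set of `d`-dimensional Hausdorff measure zero one has
`S^I(x,ε) ≥ −(d−δ) log₂ ε` for all small `ε`. -/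
theorem stmt18 {X : Type*} [MetricSpace X] [MeasurableSpace X] [BorelSpace X]
    (I : List Bool → X) (hI : IsCompInterp I)
    (U : List Bool →. List Bool) (hU : Partrec U)
    (d : ℝ) (hd : 0 ≤ d) :
    dimH (Wset U I d) ≤ ENNReal.ofReal d ∧
      ∃ F : Set X, μH[d] F = 0 ∧
        ∀ x ∉ F, ∀ δ > (0 : ℝ), ∃ εbar > (0 : ℝ), ∀ ε : ℝ, 0 < ε → ε < εbar →
          ENNReal.ofReal (-(d - δ) * Real.logb 2 ε) ≤ (Sinfo U I x ε : ℝ≥0∞) :=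
  stmt18_general I U d
end
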